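/- Fix 0 < β < 1 and let f ∈ L¹(−1,1). Define Q_β f(x) := (1/π)·∫_{−1}^{1} (t/(β+tx))·f(t) dt for x ∈ (−β,β). Then for every n ≥ 2 all the series occurring in the iterate T_β^n(Q_β f) converge absolutely at every point, and |T_β^n(Q_β f)(x)| ≤ (4·β^{n−1}/(π(1−β)))·‖f‖_{L¹(−1,1)} for all x ∈ (−1,1). In particular, T_β^n(Q_β f) → 0 geometrically, uniformly on (−1,1), as n → +∞. -/

import Mathlib

/-!
The kernel bound `|t / (β + t y)| ≤ 2β / (β² - y²)` gives `|Q_β f(y)| ≤ C β / (β² - y²)`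
on `(-β, β)` with `C = 2‖f‖₁ / π`. Since `β/d² · β/(β² - (β/d)²) = 1/(d² - 1)`, the
telescoping identity `∑_{j ≠ 0} 1/((x + 2j)² - 1) = 1/(1 - x²)` shows that `T_β` turns the
bound `C β/(β² - y²)` on `(-β, β)` into `C/(1 - x²)` on `(-1, 1)`, which is at most
`β · C β/(β² - x²)` on `(-β, β)`: every application of `T_β` gains a factor `β`. Hence
`T_β^{n-1}(Q_β f)` is bounded by `C β^{n-2}/(1 - β)` on `(-β, β)`, and one last application,
with `∑_{j ≠ 0} (x + 2j)⁻² ≤ 2`, gives the uniform bound on `(-1, 1)`.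
-/

open MeasureTheory Set Filter

/-- The subtransfer operator `T_β f(x) = ∑_{j∈ℤ, j≠0} (β/(x+2j)²) f(-β/(x+2j))`. -/
noncomputable def Tsub (β : ℝ) (f : ℝ → ℝ) (x : ℝ) : ℝ :=
  ∑' j : {j : ℤ // j ≠ 0},
    (β / (x + 2 * ((j : ℤ) : ℝ)) ^ 2) * f (-β / (x + 2 * ((j : ℤ) : ℝ)))

/-- `Q_β f(x) = (1/π) ∫_{-1}^{1} (t/(β+tx)) f(t) dt`. -/
noncomputable def Qop (β : ℝ) (f : ℝ → ℝ) (x : ℝ) : ℝ :=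
  (1 / Real.pi) * ∫ t in Ioo (-1 : ℝ) 1, (t / (β + t * x)) * f t

open Topology

lemma hasSum_sub_succ_of_antitone {c : ℕ → ℝ} (hc : Antitone c)
    (hlim : Tendsto c atTop (𝓝 0)) : HasSum (fun n ↦ c n - c (n + 1)) (c 0) := by
  rw [hasSum_iff_tendsto_nat_of_nonneg fun n ↦ sub_nonneg.2 (hc n.le_succ)]
  simp_rw [Finset.sum_range_sub']
  simpa using tendsto_const_nhds.sub hlim

lemma hasSum_one_div_add_two_mul_sq_sub_one {a : ℝ} (ha : 1 < a) :
    HasSum (fun n : ℕ ↦ 1 / ((a + 2 * n) ^ 2 - 1)) (1 / (2 * (a - 1))) := by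
  have hpos : ∀ n : ℕ, 0 < a - 1 + 2 * n := fun n ↦ by positivity
  set c : ℕ → ℝ := fun n ↦ 1 / (2 * (a - 1 + 2 * n))
  have hc : Antitone c := antitone_nat_of_succ_le fun n ↦ by
    simp only [c]; gcongr; linarith
  have hlim : Tendsto c atTop (𝓝 0) := by
    refine Tendsto.div_atTop tendsto_const_nhds (tendsto_atTop_add_const_left _ _ ?_
      |>.const_mul_atTop two_pos)
    exact tendsto_natCast_atTop_atTop.const_mul_atTop two_pos
  convert hasSum_sub_succ_of_antitone hc hlim using 1
  · ext n
    have h₀ := hpos n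
    have h₁ := hpos (n + 1)
    simp only [c]
    rw [show (a + 2 * n) ^ 2 - 1 = (a - 1 + 2 * n) * (a - 1 + 2 * (n + 1 : ℕ)) by
      push_cast; ring]
    field_simp; push_cast; ring
  · simp [c]

lemma HasSum.int_ne_zero_of_add_one_of_neg_add_one {M : Type*} [AddCommMonoid M]
    [TopologicalSpace M] [ContinuousAdd M] {g : ℤ → M} {a b : M}
    (ha : HasSum (fun n : ℕ ↦ g (n + 1)) a) (hb : HasSum (fun n : ℕ ↦ g (-(n + 1))) b) :
    HasSum (fun j : {j : ℤ // j ≠ 0} ↦ g j) (a + b) := by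
  have hg : ∀ j : ℤ, j ≠ 0 → {j : ℤ | j ≠ 0}.indicator g j = g j :=
    fun j hj ↦ indicator_of_mem hj g
  have key := HasSum.of_add_one_of_neg_add_one
    (ha.congr_fun fun n ↦ hg _ (by omega)) (hb.congr_fun fun n ↦ hg _ (by omega))
  rw [indicator_of_notMem (by simp) g, add_zero] at key
  exact hasSum_subtype_iff_indicator.2 key

lemma one_lt_abs_add_two_mul_int {x : ℝ} (hx : x ∈ Ioo (-1) 1) {j : ℤ} (hj : j ≠ 0) :
    1 < |x + 2 * (j : ℝ)| := by
  obtain ⟨hx₁, hx₂⟩ := hx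
  rcases hj.lt_or_gt with hj | hj
  · have : (j : ℝ) ≤ -1 := by exact_mod_cast Int.le_sub_one_of_lt hj
    rw [abs_of_neg (by linarith)]; linarith
  · have : (1 : ℝ) ≤ j := by exact_mod_cast hj
    rw [abs_of_pos (by linarith)]; linarith

lemma neg_div_mem_Ioo {β d : ℝ} (hβ : 0 < β) (hd : 1 < |d|) : -β / d ∈ Ioo (-β) β := by
  have : |-β / d| < β := by
    rw [abs_div, abs_neg, abs_of_pos hβ, div_lt_iff₀ (by positivity)]
    nlinarith
  exact abs_lt.1 this

lemma hasSum_one_div_add_two_mul_int_sq_sub_one {x : ℝ} (hx : x ∈ Ioo (-1) 1) :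
    HasSum (fun j : {j : ℤ // j ≠ 0} ↦ 1 / ((x + 2 * (j : ℝ)) ^ 2 - 1)) (1 / (1 - x ^ 2)) := by
  have h₁ : 0 < 1 + x := by linarith [hx.1]
  have h₂ : 0 < 1 - x := by linarith [hx.2]
  have hpos := hasSum_one_div_add_two_mul_sq_sub_one (a := x + 2) (by linarith)
  have hneg := hasSum_one_div_add_two_mul_sq_sub_one (a := 2 - x) (by linarith)
  convert HasSum.int_ne_zero_of_add_one_of_neg_add_one
    (g := fun j : ℤ ↦ 1 / ((x + 2 * (j : ℝ)) ^ 2 - 1))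
    (hpos.congr_fun fun n ↦ by push_cast; ring_nf)
    (hneg.congr_fun fun n ↦ by push_cast; ring_nf) using 1
  rw [show 1 - x ^ 2 = (1 + x) * (1 - x) by ring, show x + 2 - 1 = 1 + x by ring,
    show 2 - x - 1 = 1 - x by ring]
  field_simp; ring

lemma summable_one_div_add_two_mul_sq {a : ℝ} (ha : 1 < a) :
    Summable (fun n : ℕ ↦ 1 / (a + 2 * n) ^ 2) :=
  (hasSum_one_div_add_two_mul_sq_sub_one ha).summable.of_nonneg_of_le (fun _ ↦ by positivity)
    fun n ↦ one_div_le_one_div_of_le (by nlinarith [n.cast_nonneg (α := ℝ)]) (by linarith)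

lemma tsum_one_div_add_two_mul_sq_le {a : ℝ} (ha : 1 < a) :
    ∑' n : ℕ, 1 / (a + 2 * n) ^ 2 ≤ 1 / a + 1 / 4 := by
  rw [(summable_one_div_add_two_mul_sq ha).tsum_eq_zero_add]
  have hhead : 1 / (a + 2 * ((0 : ℕ) : ℝ)) ^ 2 ≤ 1 / a := by
    rw [Nat.cast_zero, mul_zero, add_zero]
    exact one_div_le_one_div_of_le (by positivity) (by nlinarith)
  have htail : ∑' n : ℕ, 1 / (a + 2 * ((n + 1 : ℕ) : ℝ)) ^ 2 ≤ 1 / 4 := by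
    have hsum := hasSum_one_div_add_two_mul_sq_sub_one (a := a + 2) (by linarith)
    calc ∑' n : ℕ, 1 / (a + 2 * ((n + 1 : ℕ) : ℝ)) ^ 2
        ≤ ∑' n : ℕ, 1 / ((a + 2 + 2 * n) ^ 2 - 1) := by
          refine Summable.tsum_le_tsum (fun n ↦ ?_) ?_ hsum.summable
          · exact one_div_le_one_div_of_le (by nlinarith [n.cast_nonneg (α := ℝ)])
              (by push_cast; linarith)
          · exact (summable_nat_add_iff 1).2 (summable_one_div_add_two_mul_sq ha)
      _ = 1 / (2 * (a + 2 - 1)) := hsum.tsum_eq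
      _ ≤ 1 / 4 := one_div_le_one_div_of_le (by norm_num) (by linarith)
  linarith

lemma summable_one_div_add_two_mul_int_sq {x : ℝ} (hx : x ∈ Ioo (-1) 1) :
    Summable (fun j : {j : ℤ // j ≠ 0} ↦ 1 / (x + 2 * (j : ℝ)) ^ 2) :=
  (hasSum_one_div_add_two_mul_int_sq_sub_one hx).summable.of_nonneg_of_le
    (fun _ ↦ by positivity) fun j ↦ by
      have := one_lt_abs_add_two_mul_int hx j.2
      exact one_div_le_one_div_of_le (by nlinarith [sq_abs (x + 2 * (j : ℝ))]) (by linarith)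

lemma tsum_one_div_add_two_mul_int_sq_le_two {x : ℝ} (hx : x ∈ Ioo (-1) 1) :
    ∑' j : {j : ℤ // j ≠ 0}, 1 / (x + 2 * (j : ℝ)) ^ 2 ≤ 2 := by
  obtain ⟨hx₁, hx₂⟩ := hx
  have hpos := summable_one_div_add_two_mul_sq (a := x + 2) (by linarith)
  have hneg := summable_one_div_add_two_mul_sq (a := 2 - x) (by linarith)
  rw [(HasSum.int_ne_zero_of_add_one_of_neg_add_one
    (g := fun j : ℤ ↦ 1 / (x + 2 * (j : ℝ)) ^ 2)
    (hpos.hasSum.congr_fun fun n ↦ by push_cast; ring_nf)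
    (hneg.hasSum.congr_fun fun n ↦ by push_cast; ring_nf)).tsum_eq]
  have hnear : 1 / (x + 2) + 1 / (2 - x) ≤ 3 / 2 := by
    rw [div_add_div _ _ (by linarith) (by linarith),
      div_le_div_iff₀ (by nlinarith) (by norm_num)]
    nlinarith
  linarith [tsum_one_div_add_two_mul_sq_le (a := x + 2) (by linarith),
    tsum_one_div_add_two_mul_sq_le (a := 2 - x) (by linarith)]

noncomputable def tsubTerm (β : ℝ) (g : ℝ → ℝ) (x : ℝ) (j : {j : ℤ // j ≠ 0}) : ℝ :=
  (β / (x + 2 * ((j : ℤ) : ℝ)) ^ 2) * g (-β / (x + 2 * ((j : ℤ) : ℝ)))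

section TsubBounds

variable {β x : ℝ} {g : ℝ → ℝ}

lemma abs_Tsub_le_of_hasSum {m : {j : ℤ // j ≠ 0} → ℝ} {M : ℝ} (hm : HasSum m M)
    (hle : ∀ j, |tsubTerm β g x j| ≤ m j) : |Tsub β g x| ≤ M :=
  tsum_of_norm_bounded (f := tsubTerm β g x) hm hle

lemma abs_tsubTerm_le_of_abs_le_weight {C : ℝ} (hβ : 0 < β)
    (hg : ∀ y ∈ Ioo (-β) β, |g y| ≤ C * (β / (β ^ 2 - y ^ 2))) (hx : x ∈ Ioo (-1) 1)
    (j : {j : ℤ // j ≠ 0}) :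
    |tsubTerm β g x j| ≤ C * (1 / ((x + 2 * (j : ℝ)) ^ 2 - 1)) := by
  have hd := one_lt_abs_add_two_mul_int hx j.2
  set d := x + 2 * ((j : ℤ) : ℝ)
  have hd₀ : d ≠ 0 := by rintro h; rw [h, abs_zero] at hd; linarith
  have hd₁ : d ^ 2 - 1 ≠ 0 := by nlinarith [sq_abs d]
  calc |β / d ^ 2 * g (-β / d)| = β / d ^ 2 * |g (-β / d)| := by
        rw [abs_mul, abs_of_pos (by positivity)]
    _ ≤ β / d ^ 2 * (C * (β / (β ^ 2 - (-β / d) ^ 2))) := by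
        gcongr; exact hg _ (neg_div_mem_Ioo hβ hd)
    _ = C * (1 / (d ^ 2 - 1)) := by
        rw [show β ^ 2 - (-β / d) ^ 2 = β ^ 2 * (d ^ 2 - 1) / d ^ 2 by field_simp]
        field_simp

lemma summable_abs_tsubTerm_of_abs_le_weight {C : ℝ} (hβ : 0 < β)
    (hg : ∀ y ∈ Ioo (-β) β, |g y| ≤ C * (β / (β ^ 2 - y ^ 2))) (hx : x ∈ Ioo (-1) 1) :
    Summable (fun j ↦ |tsubTerm β g x j|) :=
  ((hasSum_one_div_add_two_mul_int_sq_sub_one hx).mul_left C).summable.of_nonneg_of_le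
    (fun _ ↦ abs_nonneg _) (abs_tsubTerm_le_of_abs_le_weight hβ hg hx)

lemma abs_Tsub_le_of_abs_le_weight {C : ℝ} (hβ : 0 < β)
    (hg : ∀ y ∈ Ioo (-β) β, |g y| ≤ C * (β / (β ^ 2 - y ^ 2))) (hx : x ∈ Ioo (-1) 1) :
    |Tsub β g x| ≤ C * (1 / (1 - x ^ 2)) :=
  abs_Tsub_le_of_hasSum ((hasSum_one_div_add_two_mul_int_sq_sub_one hx).mul_left C)
    (abs_tsubTerm_le_of_abs_le_weight hβ hg hx)

lemma abs_Tsub_le_of_abs_le {K : ℝ} (hβ : 0 < β) (hg : ∀ y ∈ Ioo (-β) β, |g y| ≤ K)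
    (hx : x ∈ Ioo (-1) 1) : |Tsub β g x| ≤ 2 * β * K := by
  have hK : 0 ≤ K := (abs_nonneg _).trans (hg 0 ⟨by linarith, hβ⟩)
  have hterm : ∀ j : {j : ℤ // j ≠ 0},
      |tsubTerm β g x j| ≤ β * K * (1 / (x + 2 * (j : ℝ)) ^ 2) := by
    intro j
    have hd := one_lt_abs_add_two_mul_int hx j.2
    calc |tsubTerm β g x j| = β / (x + 2 * (j : ℝ)) ^ 2 * |g (-β / (x + 2 * (j : ℝ)))| := by
          rw [tsubTerm, abs_mul, abs_of_nonneg (by positivity)]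
      _ ≤ β / (x + 2 * (j : ℝ)) ^ 2 * K := by gcongr; exact hg _ (neg_div_mem_Ioo hβ hd)
      _ = β * K * (1 / (x + 2 * (j : ℝ)) ^ 2) := by ring
  calc |Tsub β g x| ≤ β * K * ∑' j : {j : ℤ // j ≠ 0}, 1 / (x + 2 * (j : ℝ)) ^ 2 :=
        abs_Tsub_le_of_hasSum ((summable_one_div_add_two_mul_int_sq hx).hasSum.mul_left _) hterm
    _ ≤ β * K * 2 := by gcongr; exact tsum_one_div_add_two_mul_int_sq_le_two hx
    _ = 2 * β * K := by ring

lemma one_div_one_sub_sq_le_mul (hβ : β ≤ 1) {y : ℝ} (hy : y ∈ Ioo (-β) β) :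
    1 / (1 - y ^ 2) ≤ β * (β / (β ^ 2 - y ^ 2)) := by
  have hy2 : y ^ 2 < β ^ 2 := sq_lt_sq' hy.1 hy.2
  have hβ2 : β ^ 2 ≤ 1 := pow_le_one₀ (by linarith [hy.1, hy.2]) hβ
  rw [← mul_div_assoc, div_le_div_iff₀ (by linarith) (by linarith)]
  nlinarith [mul_le_mul_of_nonneg_left hβ2 (sq_nonneg y)]

lemma abs_iterate_Tsub_le {q : ℝ → ℝ} {C : ℝ} (hβ₀ : 0 < β) (hβ₁ : β ≤ 1) (hC : 0 ≤ C)
    (hq : ∀ y ∈ Ioo (-β) β, |q y| ≤ C * (β / (β ^ 2 - y ^ 2))) (k : ℕ) :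
    ∀ y ∈ Ioo (-β) β, |(Tsub β)^[k] q y| ≤ C * β ^ k * (β / (β ^ 2 - y ^ 2)) := by
  induction k with
  | zero => simpa using hq
  | succ k ih =>
    intro y hy
    rw [Function.iterate_succ_apply']
    calc |Tsub β ((Tsub β)^[k] q) y| ≤ C * β ^ k * (1 / (1 - y ^ 2)) :=
          abs_Tsub_le_of_abs_le_weight hβ₀ ih ⟨by linarith [hy.1], by linarith [hy.2]⟩
      _ ≤ C * β ^ k * (β * (β / (β ^ 2 - y ^ 2))) := by
          gcongr; exact one_div_one_sub_sq_le_mul hβ₁ hy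
      _ = C * β ^ (k + 1) * (β / (β ^ 2 - y ^ 2)) := by ring

end TsubBounds

lemma abs_div_add_mul_le {β t y : ℝ} (ht : |t| ≤ 1) (hy : |y| < β) :
    |t / (β + t * y)| ≤ 2 * (β / (β ^ 2 - y ^ 2)) := by
  have hden : β - |y| ≤ β + t * y := by
    have : |t * y| ≤ |y| := by rw [abs_mul]; exact mul_le_of_le_one_left (abs_nonneg y) ht
    linarith [neg_abs_le (t * y)]
  have hgap : 0 < β - |y| := by linarith
  have hsum : 0 < β + |y| := by linarith [abs_nonneg y]
  calc |t / (β + t * y)| = |t| / (β + t * y) := by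
        rw [abs_div, abs_of_pos (hgap.trans_le hden)]
    _ ≤ 1 / (β - |y|) := div_le_div₀ zero_le_one ht hgap hden
    _ = (β + |y|) / (β ^ 2 - y ^ 2) := by
        rw [← sq_abs y, show β ^ 2 - |y| ^ 2 = (β - |y|) * (β + |y|) by ring]
        field_simp
    _ ≤ 2 * (β / (β ^ 2 - y ^ 2)) := by
        rw [← mul_div_assoc]
        gcongr
        · nlinarith [abs_nonneg y, sq_abs y]
        · linarith

lemma abs_Qop_le {β y : ℝ} {f : ℝ → ℝ} (hf : IntegrableOn f (Ioo (-1) 1))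
    (hy : y ∈ Ioo (-β) β) :
    |Qop β f y| ≤ 2 * (∫ t in Ioo (-1 : ℝ) 1, |f t|) / Real.pi * (β / (β ^ 2 - y ^ 2)) := by
  set K := 2 * (β / (β ^ 2 - y ^ 2))
  have hkernel : ∀ᵐ t ∂volume.restrict (Ioo (-1 : ℝ) 1),
      ‖t / (β + t * y) * f t‖ ≤ K * |f t| := by
    refine (ae_restrict_iff' measurableSet_Ioo).2 (Eventually.of_forall fun t ht ↦ ?_)
    rw [Real.norm_eq_abs, abs_mul]
    gcongr
    exact abs_div_add_mul_le (abs_le.2 ⟨ht.1.le, ht.2.le⟩) (abs_lt.2 hy)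
  have hint := norm_integral_le_of_norm_le (hf.abs.const_mul K) hkernel
  rw [integral_const_mul, Real.norm_eq_abs] at hint
  rw [Qop, abs_mul, abs_of_pos (by positivity)]
  calc 1 / Real.pi * |∫ t in Ioo (-1 : ℝ) 1, t / (β + t * y) * f t|
      ≤ 1 / Real.pi * (K * ∫ t in Ioo (-1 : ℝ) 1, |f t|) := by gcongr
    _ = _ := by ring

/-- For `0 < β < 1` and `f ∈ L¹(-1,1)`, all series occurring in the iterates
`T_β^n (Q_β f)` converge absolutely pointwise, and `|T_β^n (Q_β f)(x)| ≤
(4β^{n-1}/(π(1-β))) ‖f‖_{L¹(-1,1)}` on `(-1,1)` for `n ≥ 2`. -/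
theorem subtransfer_iterates_of_Q_decay_geometrically
    (β : ℝ) (hβ0 : 0 < β) (hβ1 : β < 1) (f : ℝ → ℝ)
    (hf : IntegrableOn f (Ioo (-1) 1)) (n : ℕ) (hn : 2 ≤ n) :
    (∀ k : ℕ, k < n → ∀ x ∈ Ioo (-1 : ℝ) 1,
      Summable (fun j : {j : ℤ // j ≠ 0} =>
        |(β / (x + 2 * ((j : ℤ) : ℝ)) ^ 2) *
          ((Tsub β)^[k] (Qop β f)) (-β / (x + 2 * ((j : ℤ) : ℝ)))|)) ∧
    (∀ x ∈ Ioo (-1 : ℝ) 1,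
      |(Tsub β)^[n] (Qop β f) x| ≤
        (4 * β ^ (n - 1) / (Real.pi * (1 - β))) * ∫ t in Ioo (-1 : ℝ) 1, |f t|) := by
  obtain ⟨m, rfl⟩ : ∃ m, n = m + 2 := ⟨n - 2, by omega⟩
  set M := ∫ t in Ioo (-1 : ℝ) 1, |f t|
  have hC : 0 ≤ 2 * M / Real.pi := by positivity
  have hiter := abs_iterate_Tsub_le hβ0 hβ1.le hC fun y hy ↦ abs_Qop_le hf hy
  refine ⟨fun k _ x hx ↦ summable_abs_tsubTerm_of_abs_le_weight hβ0 (hiter k) hx, fun x hx ↦ ?_⟩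
  have hbdd : ∀ y ∈ Ioo (-β) β,
      |(Tsub β)^[m + 1] (Qop β f) y| ≤ 2 * M / Real.pi * β ^ m * (1 / (1 - β)) := by
    intro y hy
    rw [Function.iterate_succ_apply']
    refine (abs_Tsub_le_of_abs_le_weight hβ0 (hiter m)
      ⟨by linarith [hy.1], by linarith [hy.2]⟩).trans ?_
    have : y ^ 2 < β := (sq_lt_sq' hy.1 hy.2).trans (by nlinarith)
    gcongr 2 * M / Real.pi * β ^ m * ?_
    exact one_div_le_one_div_of_le (by linarith) (by linarith)
  calc |(Tsub β)^[m + 2] (Qop β f) x| = |Tsub β ((Tsub β)^[m + 1] (Qop β f)) x| := by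
        rw [Function.iterate_succ_apply']
    _ ≤ 2 * β * (2 * M / Real.pi * β ^ m * (1 / (1 - β))) := abs_Tsub_le_of_abs_le hβ0 hbdd hx
    _ = 4 * β ^ (m + 2 - 1) / (Real.pi * (1 - β)) * M := by
        rw [show m + 2 - 1 = m + 1 by omega]
        field_simp [(by linarith : (1 - β) ≠ 0)]
        ring
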